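/- Let X and Y be Polish spaces, P ∈ P(X), c : X × X → [0,∞] a Borel transportation cost on X, ε ≥ 0, and f : X → Y a surjective Borel map admitting a Borel right inverse g : Y → X (i.e., f ∘ g = id_Y). Then f_# B_ε^{c∘(g×g)∘(f×f)}(P) = B_ε^{c∘(g×g)}(f_#P), and B_ε^{c∘(g×g)}(f_#P) ⊆ f_# B_ε^c((g∘f)_#P), where c∘(g×g)∘(f×f) is the cost (x₁,x₂) ↦ c(g(f(x₁)), g(f(x₂))) on X and c∘(g×g) is the cost (y₁,y₂) ↦ c(g(y₁), g(y₂)) on Y. -/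

import Mathlib

/-!
Pushing a coupling forward along `h × h` preserves its cost for a cost that factors through
`h × h`; with `h = f` this gives `f₊ B ⊆ B`, with `h = g` the second inclusion (witness `g₊Q`).
For `B ⊆ f₊ B`, a coupling of `f₊P` and `Q` is disintegrated along its first marginal (here `Y`
must be standard Borel); its conditional kernel, precomposed with `f` and glued to `P`, yields a
coupling of `P` and `Q` whose second coordinate, pushed forward by `g`, is a coupling of `P` and
`g₊Q` of the same cost, because `f ∘ g = id`.
-/

open MeasureTheory
open scoped ENNReal

noncomputable section

/-- The set of couplings of two measures. -/
def couplings {X : Type*} [MeasurableSpace X] (P Q : Measure X) :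
    Set (Measure (X × X)) :=
  {γ | IsProbabilityMeasure γ ∧ γ.map Prod.fst = P ∧ γ.map Prod.snd = Q}

/-- Optimal transport discrepancy with transportation cost `c`. -/
def OTCost {X : Type*} [MeasurableSpace X] (c : X × X → ℝ≥0∞) (P Q : Measure X) : ℝ≥0∞ :=
  ⨅ γ ∈ couplings P Q, ∫⁻ x, c x ∂γ

/-- The optimal transport ambiguity set of radius `ε` around `P`, for cost `c`. -/
def ambiguitySet {X : Type*} [MeasurableSpace X] (c : X × X → ℝ≥0∞) (ε : ℝ≥0∞)
    (P : Measure X) : Set (Measure X) :=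
  {Q | IsProbabilityMeasure Q ∧ OTCost c P Q ≤ ε}

open ProbabilityTheory

section

variable {X Y Z : Type*} [MeasurableSpace X] [MeasurableSpace Y] [MeasurableSpace Z]

namespace MeasureTheory.Measure

lemma map_prodMap_compProd_comap (P : Measure X) [SFinite P] (κ : Kernel Y Z)
    [IsSFiniteKernel κ] {f : X → Y} (hf : Measurable f) :
    (P ⊗ₘ κ.comap f hf).map (Prod.map f id) = P.map f ⊗ₘ κ := by
  ext s hs
  rw [Measure.map_apply (hf.prodMap measurable_id) hs,
    Measure.compProd_apply (hf.prodMap measurable_id hs), Measure.compProd_apply hs,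
    lintegral_map (Kernel.measurable_kernel_prodMk_left hs) hf]
  rfl

lemma exists_fst_eq_and_map_prodMap_id_eq [StandardBorelSpace Z] [Nonempty Z]
    (P : Measure X) [IsProbabilityMeasure P] {f : X → Y} (hf : Measurable f)
    (γ : Measure (Y × Z)) [IsFiniteMeasure γ] (hγ : γ.fst = P.map f) :
    ∃ γ' : Measure (X × Z), IsProbabilityMeasure γ' ∧ γ'.fst = P ∧
      γ'.map (Prod.map f id) = γ := by
  refine ⟨P ⊗ₘ γ.condKernel.comap f hf, inferInstance, Measure.fst_compProd _ _, ?_⟩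
  rw [map_prodMap_compProd_comap _ _ hf, ← hγ, disintegrate]

end MeasureTheory.Measure

lemma otCost_le_of_forall_exists_coupling {c : X × X → ℝ≥0∞} {c' : Y × Y → ℝ≥0∞}
    {P Q : Measure X} {P' Q' : Measure Y}
    (h : ∀ γ ∈ couplings P Q, ∃ γ' ∈ couplings P' Q', ∫⁻ y, c' y ∂γ' ≤ ∫⁻ x, c x ∂γ) :
    OTCost c' P' Q' ≤ OTCost c P Q := by
  refine le_iInf₂ fun γ hγ => ?_
  obtain ⟨γ', hγ', hle⟩ := h γ hγ
  exact (iInf₂_le γ' hγ').trans hle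

lemma map_prodMap_mem_couplings {P Q : Measure X} {γ : Measure (X × X)}
    (hγ : γ ∈ couplings P Q) {h : X → Y} (hh : Measurable h) :
    γ.map (Prod.map h h) ∈ couplings (P.map h) (Q.map h) := by
  obtain ⟨_, hP, hQ⟩ := hγ
  refine ⟨Measure.isProbabilityMeasure_map (hh.prodMap hh).aemeasurable, ?_, ?_⟩
  · rw [Measure.map_map measurable_fst (hh.prodMap hh), ← hP, Measure.map_map hh measurable_fst]
    rfl
  · rw [Measure.map_map measurable_snd (hh.prodMap hh), ← hQ, Measure.map_map hh measurable_snd]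
    rfl

lemma otCost_map_le {c : Y × Y → ℝ≥0∞} (hc : Measurable c) {h : X → Y} (hh : Measurable h)
    (P Q : Measure X) :
    OTCost c (P.map h) (Q.map h) ≤ OTCost (fun x => c (h x.1, h x.2)) P Q :=
  otCost_le_of_forall_exists_coupling fun γ hγ =>
    ⟨γ.map (Prod.map h h), map_prodMap_mem_couplings hγ hh,
      (lintegral_map hc (hh.prodMap hh)).le⟩

lemma otCost_le_otCost_map_of_leftInverse [StandardBorelSpace Y] {c : Y × Y → ℝ≥0∞}
    (hc : Measurable c) {f : X → Y} (hf : Measurable f) {g : Y → X} (hg : Measurable g)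
    (hfg : Function.LeftInverse f g) (P : Measure X) [IsProbabilityMeasure P] (Q : Measure Y) :
    OTCost (fun x => c (f x.1, f x.2)) P (Q.map g) ≤ OTCost c (P.map f) Q := by
  refine otCost_le_of_forall_exists_coupling fun γ ⟨_, hγP, hγQ⟩ => ?_
  have : Nonempty Y := (nonempty_of_isProbabilityMeasure P).map f
  obtain ⟨γ', _, hγ'P, hγ'γ⟩ := Measure.exists_fst_eq_and_map_prodMap_id_eq P hf γ hγP
  have hγ'Q : γ'.map Prod.snd = Q := by
    rw [← hγQ, ← hγ'γ, Measure.map_map measurable_snd (hf.prodMap measurable_id)]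
    rfl
  refine ⟨γ'.map (Prod.map id g), ⟨Measure.isProbabilityMeasure_map
    (measurable_id.prodMap hg).aemeasurable, ?_, ?_⟩, le_of_eq ?_⟩
  · rw [Measure.map_map measurable_fst (measurable_id.prodMap hg)]
    exact hγ'P
  · rw [Measure.map_map measurable_snd (measurable_id.prodMap hg), ← hγ'Q,
      Measure.map_map hg measurable_snd]
    rfl
  · calc ∫⁻ x, c (f x.1, f x.2) ∂γ'.map (Prod.map id g)
        = ∫⁻ x, c (f x.1, f (g x.2)) ∂γ' :=
          lintegral_map (hc.comp (hf.prodMap hf)) (measurable_id.prodMap hg)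
      _ = ∫⁻ x, c (Prod.map f id x) ∂γ' := by simp only [hfg _]; rfl
      _ = ∫⁻ y, c y ∂γ := by rw [← hγ'γ, lintegral_map hc (hf.prodMap measurable_id)]

end

theorem pushforward_ambiguity_surjective_general
    {X Y : Type*}
    [MeasurableSpace X]
    [MeasurableSpace Y] [TopologicalSpace Y] [PolishSpace Y] [BorelSpace Y]
    (P : Measure X) [IsProbabilityMeasure P]
    (c : X × X → ℝ≥0∞) (hc : Measurable c) (ε : ℝ≥0∞)
    (f : X → Y) (hf : Measurable f)
    (g : Y → X) (hg : Measurable g) (hfg : ∀ y, f (g y) = y) :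
    (fun μ => μ.map f) ''
        ambiguitySet (fun x => c (g (f x.1), g (f x.2))) ε P
        = ambiguitySet (fun y => c (g y.1, g y.2)) ε (P.map f)
      ∧ ambiguitySet (fun y => c (g y.1, g y.2)) ε (P.map f)
          ⊆ (fun μ => μ.map f) '' ambiguitySet c ε (P.map (g ∘ f)) := by
  have hcY : Measurable fun y : Y × Y => c (g y.1, g y.2) := hc.comp (hg.prodMap hg)
  have hfg_map : ∀ Q : Measure Y, (Q.map g).map f = Q := fun Q => by
    rw [Measure.map_map hf hg, Function.LeftInverse.comp_eq_id hfg, Measure.map_id]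
  refine ⟨Set.Subset.antisymm ?_ ?_, ?_⟩
  · rintro _ ⟨μ, ⟨_, hμ⟩, rfl⟩
    exact ⟨Measure.isProbabilityMeasure_map hf.aemeasurable, (otCost_map_le hcY hf P μ).trans hμ⟩
  · rintro Q ⟨_, hQ⟩
    exact ⟨Q.map g, ⟨Measure.isProbabilityMeasure_map hg.aemeasurable,
      (otCost_le_otCost_map_of_leftInverse hcY hf hg hfg P Q).trans hQ⟩, hfg_map Q⟩
  · rintro Q ⟨_, hQ⟩
    refine ⟨Q.map g, ⟨Measure.isProbabilityMeasure_map hg.aemeasurable, ?_⟩, hfg_map Q⟩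
    rw [← Measure.map_map hg hf]
    exact (otCost_map_le hc hg _ Q).trans hQ

/-- Propagation of OT ambiguity sets under a surjective Borel map with Borel right inverse. -/
theorem pushforward_ambiguity_surjective
    {X Y : Type*}
    [MeasurableSpace X] [TopologicalSpace X] [PolishSpace X] [BorelSpace X]
    [MeasurableSpace Y] [TopologicalSpace Y] [PolishSpace Y] [BorelSpace Y]
    (P : Measure X) [IsProbabilityMeasure P]
    (c : X × X → ℝ≥0∞) (hc : Measurable c) (ε : ℝ≥0∞)
    (f : X → Y) (hf : Measurable f) (hsurj : Function.Surjective f)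
    (g : Y → X) (hg : Measurable g) (hfg : ∀ y, f (g y) = y) :
    (fun μ => μ.map f) ''
        ambiguitySet (fun x => c (g (f x.1), g (f x.2))) ε P
        = ambiguitySet (fun y => c (g y.1, g y.2)) ε (P.map f)
      ∧ ambiguitySet (fun y => c (g y.1, g y.2)) ε (P.map f)
          ⊆ (fun μ => μ.map f) '' ambiguitySet c ε (P.map (g ∘ f)) :=
  pushforward_ambiguity_surjective_general P c hc ε f hf g hg hfg
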